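/- Let T be a finite set, {S_t}_{t∈T} a family of finite sets with S = ⊔_{t∈T} S_t, and let I_s (s ∈ S), J_t (t ∈ T), and J be nonempty finite linearly ordered sets. Let w ∈ se(T)^J with inputs {J_t}, let u_t ∈ se(S_t)^{J_t} with inputs {I_s}_{s∈S_t} for each t ∈ T, and let v ∈ se(S)^J be their operadic composition: >_v is the unique total order on ⊔_{s∈S} I_s restricting to each >_{u_t} and making ⊔_{t} Q_{u_t} : ⊔_{s∈S} I_s → (⊔_t J_t, >_w) nondecreasing, and Q_v = Q_w ∘ ⊔_t Q_{u_t}. Then |v| − |S| ≤ (|w| − |T|) + Σ_{t∈T} (|u_t| − |S_t|), where |u| denotes the number of elementary equivalence classes of the element u. -/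

import Mathlib

/-!
Every elementary class begins either at the least element of its component or at a *return*: an
element that is least in its class although its component occurred earlier. Hence `|u|` minus the
number of components counts returns.

Let `x` be a return of `v`, `z` its immediate predecessor (necessarily in another component `I_s`)
and `y` an earlier element of the component of `x`. If `z` lies in the same block `S_t` as `x`,
then `x` is a return of `u_t`. Otherwise `Q = ⊔_t Q_{u_t}` sends `y < z < x` to `Q y < Q z < Q x`
for `>_w`, with `Q z` outside the component of `Q x`; so `Q y` and `Q x` are not elementarily
equivalent and the class of `Q x` begins with a return of `w`. Two such returns `x₁ < x₂` with
elementarily equivalent images are separated in the same way by the predecessor of `x₂`, so this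
assignment of returns of `w` is injective.
-/

/-- A total order (strict, as `<`) on the disjoint union `⊔_{i} A i` which restricts
to the given linear order on each `A i` and satisfies the non-interleaving
condition. -/
def IsSeOrder {ι : Type*} {A : ι → Type*} [∀ i, LinearOrder (A i)]
    (r : (Σ i, A i) → (Σ i, A i) → Prop) : Prop :=
  IsStrictTotalOrder (Σ i, A i) r ∧
  (∀ (i : ι) (a b : A i), a < b ↔ r ⟨i, a⟩ ⟨i, b⟩) ∧
  (∀ i₁ i₂ : ι, i₁ ≠ i₂ → ¬ ∃ (a₁ b₁ : A i₁) (a₂ b₂ : A i₂),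
      r ⟨i₁, a₁⟩ ⟨i₂, a₂⟩ ∧ r ⟨i₂, a₂⟩ ⟨i₁, b₁⟩ ∧ r ⟨i₁, b₁⟩ ⟨i₂, b₂⟩)

/-- An element of `se(ι)^J` with inputs `{A i}`: a total order as in `IsSeOrder`
together with a map `Q : ⊔ A i → J` which is nondecreasing with respect to it. -/
def IsSeElem {ι : Type*} {A : ι → Type*} [∀ i, LinearOrder (A i)]
    {J : Type*} [LinearOrder J]
    (r : (Σ i, A i) → (Σ i, A i) → Prop) (Q : (Σ i, A i) → J) : Prop :=
  IsSeOrder r ∧ ∀ x y : Σ i, A i, r x y → Q x ≤ Q y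

/-- Elementary equivalence of `x, y ∈ ⊔_i A i` with respect to the order `r`:
they lie in the same `A i` and every element strictly between them lies in `A i`. -/
def ElemEquiv {ι : Type*} {A : ι → Type*}
    (r : (Σ i, A i) → (Σ i, A i) → Prop) (x y : Σ i, A i) : Prop :=
  x.1 = y.1 ∧
    ∀ z : Σ i, A i, (r x z ∧ r z y) ∨ (r y z ∧ r z x) → z.1 = x.1

/-- The number of elementary equivalence classes. -/
noncomputable def NumClasses {ι : Type*} {A : ι → Type*}
    (r : (Σ i, A i) → (Σ i, A i) → Prop) : ℕ :=
  Nat.card {C : Set (Σ i, A i) // ∃ x, C = {y | ElemEquiv r x y}}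

section

variable {T : Type*} [Fintype T] {St : T → Type*} [∀ t, Fintype (St t)]
  {I : ∀ t, St t → Type*} [∀ t s, Fintype (I t s)] [∀ t s, LinearOrder (I t s)]
  [∀ t s, Nonempty (I t s)]
  {Jt : T → Type*} [∀ t, Fintype (Jt t)] [∀ t, LinearOrder (Jt t)]
  [∀ t, Nonempty (Jt t)]
  {J : Type*} [Fintype J] [LinearOrder J] [Nonempty J]

/-- The map `⊔_t Q_{u_t} : ⊔_{s ∈ S} I_s → ⊔_{t ∈ T} J_t`, where
`S = ⊔_t S_t`. -/
def FMap (Qu : ∀ t, (Σ s : St t, I t s) → Jt t)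
    (x : Σ q : Σ t, St t, I q.1 q.2) : Σ t, Jt t :=
  ⟨x.1.1, Qu x.1.1 ⟨x.1.2, x.2⟩⟩

/-- The characterizing conditions of the order `>_v` of the operadic composition:
it is a total order on `⊔_{s ∈ S} I_s` restricting to `>_{u_t}` on
`⊔_{s ∈ S_t} I_s` for each `t`, and it makes `⊔_t Q_{u_t}` nondecreasing with
respect to `>_w`. -/
def IsCompOrder (rW : (Σ t, Jt t) → (Σ t, Jt t) → Prop)
    (ru : ∀ t, (Σ s : St t, I t s) → (Σ s : St t, I t s) → Prop)
    (Qu : ∀ t, (Σ s : St t, I t s) → Jt t)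
    (rv : (Σ q : Σ t, St t, I q.1 q.2) → (Σ q : Σ t, St t, I q.1 q.2) → Prop) :
    Prop :=
  IsStrictTotalOrder (Σ q : Σ t, St t, I q.1 q.2) rv ∧
  (∀ (t : T) (a b : Σ s : St t, I t s),
      ru t a b ↔ rv ⟨⟨t, a.1⟩, a.2⟩ ⟨⟨t, b.1⟩, b.2⟩) ∧
  (∀ x y : Σ q : Σ t, St t, I q.1 q.2,
      rv x y → FMap Qu x = FMap Qu y ∨ rW (FMap Qu x) (FMap Qu y))

end

theorem Nat.card_subtype_eq_card_and_add_card_and_not {α : Type*} [Finite α]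
    (p q : α → Prop) :
    Nat.card {x // p x} = Nat.card {x // p x ∧ q x} + Nat.card {x // p x ∧ ¬ q x} := by
  classical
  rw [← Nat.card_sum]
  exact Nat.card_congr ((Equiv.sumCompl fun x : {x // p x} => q x.1).symm.trans
    (Equiv.sumCongr (Equiv.subtypeSubtypeEquivSubtypeInter p q)
      (Equiv.subtypeSubtypeEquivSubtypeInter p fun x => ¬ q x)))

section ElementaryClasses

variable {ι : Type*} {A : ι → Type*} (r : (Σ i, A i) → (Σ i, A i) → Prop)

def IsClassMin (x : Σ i, A i) : Prop := ∀ y, ElemEquiv r x y → ¬ r y x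

def IsCompMin (x : Σ i, A i) : Prop := ∀ y : Σ i, A i, y.1 = x.1 → ¬ r y x

def IsReturn (x : Σ i, A i) : Prop := IsClassMin r x ∧ ¬ IsCompMin r x

variable {r}

theorem not_elemEquiv_of_rel_of_rel {a b c : Σ i, A i} (hab : r a b) (hbc : r b c)
    (hb : b.1 ≠ c.1) : ¬ ElemEquiv r a c :=
  fun h => hb ((h.2 b (Or.inl ⟨hab, hbc⟩)).trans h.1)

theorem ElemEquiv.symm {x y : Σ i, A i} (h : ElemEquiv r x y) : ElemEquiv r y x :=
  ⟨h.1.symm, fun z hz => (h.2 z hz.symm).trans h.1⟩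

variable [IsStrictTotalOrder (Σ i, A i) r]

theorem ElemEquiv.refl (x : Σ i, A i) : ElemEquiv r x x :=
  ⟨rfl, fun _ hz => by
    rcases hz with ⟨h, h'⟩ | ⟨h, h'⟩ <;> exact absurd (trans_of r h h') (irrefl_of r x)⟩

theorem ElemEquiv.trans {x y z : Σ i, A i} (hxy : ElemEquiv r x y) (hyz : ElemEquiv r y z) :
    ElemEquiv r x z := by
  refine ⟨hxy.1.trans hyz.1, fun w hw => ?_⟩
  rcases trichotomous_of r w y with hwy | rfl | hyw
  · rcases hw with ⟨h, _⟩ | ⟨h, _⟩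
    · exact hxy.2 w (Or.inl ⟨h, hwy⟩)
    · exact (hyz.2 w (Or.inr ⟨h, hwy⟩)).trans hxy.1.symm
  · exact hxy.1.symm
  · rcases hw with ⟨_, h⟩ | ⟨_, h⟩
    · exact (hyz.2 w (Or.inl ⟨hyw, h⟩)).trans hxy.1.symm
    · exact hxy.2 w (Or.inr ⟨hyw, h⟩)

theorem exists_isClassMin_elemEquiv [Finite (Σ i, A i)] (x : Σ i, A i) :
    ∃ m, IsClassMin r m ∧ ElemEquiv r x m := by
  obtain ⟨m, hxm, hmin⟩ := (Finite.wellFounded_of_trans_of_irrefl r).has_min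
    {y | ElemEquiv r x y} ⟨x, ElemEquiv.refl x⟩
  exact ⟨m, fun y hy => hmin y (hxm.trans hy), hxm⟩

theorem numClasses_eq_card_isClassMin [Finite (Σ i, A i)] :
    NumClasses r = Nat.card {x // IsClassMin r x} := by
  refine (Nat.card_eq_of_bijective (fun x => ⟨{y | ElemEquiv r x.1 y}, x.1, rfl⟩)
    ⟨?_, ?_⟩).symm
  · rintro ⟨x₁, h₁⟩ ⟨x₂, h₂⟩ h
    have h₁₂ : ElemEquiv r x₁ x₂ :=
      (Set.ext_iff.mp (congrArg Subtype.val h) x₂).2 (.refl x₂)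
    rcases trichotomous_of r x₁ x₂ with h' | h' | h'
    · exact absurd h' (h₂ x₁ h₁₂.symm)
    · exact Subtype.ext h'
    · exact absurd h' (h₁ x₂ h₁₂)
  · rintro ⟨C, x, rfl⟩
    obtain ⟨m, hm, hxm⟩ := exists_isClassMin_elemEquiv (r := r) x
    refine ⟨⟨m, hm⟩, Subtype.ext (Set.ext fun y => ?_)⟩
    exact ⟨hxm.trans, hxm.symm.trans⟩

theorem card_isCompMin [Finite (Σ i, A i)] [∀ i, Nonempty (A i)] :
    Nat.card {x // IsCompMin r x} = Nat.card ι := by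
  refine Nat.card_eq_of_bijective (fun x => x.1.1) ⟨?_, fun i => ?_⟩
  · rintro ⟨x₁, h₁⟩ ⟨x₂, h₂⟩ (h : x₁.1 = x₂.1)
    rcases trichotomous_of r x₁ x₂ with h' | h' | h'
    · exact absurd h' (h₂ x₁ h)
    · exact Subtype.ext h'
    · exact absurd h' (h₁ x₂ h.symm)
  · obtain ⟨m, (hm : m.1 = i), hmin⟩ := (Finite.wellFounded_of_trans_of_irrefl r).has_min
      {x | x.1 = i} ⟨⟨i, Classical.arbitrary _⟩, rfl⟩
    exact ⟨⟨m, fun y hy => hmin y (hy.trans hm)⟩, hm⟩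

theorem numClasses_eq_card_add_card_isReturn [Finite (Σ i, A i)] [∀ i, Nonempty (A i)] :
    NumClasses r = Nat.card ι + Nat.card {x // IsReturn r x} := by
  rw [numClasses_eq_card_isClassMin,
    Nat.card_subtype_eq_card_and_add_card_and_not _ (IsCompMin r), ← card_isCompMin (r := r)]
  congr 1
  exact Nat.card_congr (Equiv.subtypeEquivRight fun x =>
    ⟨And.right, fun h => ⟨fun y hy => h y hy.1.symm, h⟩⟩)

end ElementaryClasses

section CovByRel

variable {α : Type*} (r : α → α → Prop)

def CovByRel (z x : α) : Prop := r z x ∧ ∀ w, r z w → ¬ r w x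

variable {r}

theorem exists_covByRel [Finite α] [IsStrictTotalOrder α r] {y x : α} (h : r y x) :
    ∃ z, CovByRel r z x := by
  obtain ⟨z, hzx, hmax⟩ := (Finite.wellFounded_of_trans_of_irrefl (Function.swap r)).has_min
    {w | r w x} ⟨y, h⟩
  exact ⟨z, hzx, fun w hzw hwx => hmax w hwx hzw⟩

theorem CovByRel.rel_of_rel_of_ne [IsStrictTotalOrder α r] {z x y : α} (hz : CovByRel r z x)
    (hyx : r y x) (hyz : y ≠ z) : r y z := by
  rcases trichotomous_of r y z with h | h | h
  · exact h
  · exact absurd h hyz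
  · exact absurd hyx (hz.2 y h)

theorem CovByRel.comap {β : Type*} {r' : β → β → Prop} {f : β → α}
    (hf : ∀ a b, r' a b ↔ r (f a) (f b)) {a b : β} (h : CovByRel r (f a) (f b)) :
    CovByRel r' a b :=
  ⟨(hf a b).2 h.1, fun w haw hwb => h.2 (f w) ((hf a w).1 haw) ((hf w b).1 hwb)⟩

end CovByRel

section Returns

variable {ι : Type*} {A : ι → Type*} {r : (Σ i, A i) → (Σ i, A i) → Prop}

theorem exists_rel_of_not_isCompMin {x : Σ i, A i} (hx : ¬ IsCompMin r x) :
    ∃ y, y.1 = x.1 ∧ r y x := by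
  simpa [IsCompMin] using hx

variable [IsStrictTotalOrder (Σ i, A i) r]

theorem IsReturn.fst_ne_of_covByRel {x z : Σ i, A i} (hx : IsReturn r x)
    (hz : CovByRel r z x) : z.1 ≠ x.1 := by
  refine fun hzx => hx.1 z ⟨hzx.symm, fun w hw => ?_⟩ hz.1
  rcases hw with ⟨hxw, hwz⟩ | ⟨hzw, hwx⟩
  · exact absurd (trans_of r hxw hwz) (asymm_of r hz.1)
  · exact absurd hwx (hz.2 w hzw)

theorem isReturn_of_covByRel {x z : Σ i, A i} (hx : ¬ IsCompMin r x) (hz : CovByRel r z x)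
    (hzx : z.1 ≠ x.1) : IsReturn r x := by
  refine ⟨fun y hy hyx => ?_, hx⟩
  have hyz : r y z := hz.rel_of_rel_of_ne hyx (by rintro rfl; exact hzx hy.1.symm)
  exact not_elemEquiv_of_rel_of_rel hyz hz.1 hzx hy.symm

theorem exists_isReturn_elemEquiv [Finite (Σ i, A i)] {x y : Σ i, A i} (hyx : y.1 = x.1)
    (h : r y x) (hne : ¬ ElemEquiv r y x) : ∃ m, IsReturn r m ∧ ElemEquiv r x m := by
  obtain ⟨m, hm, hxm⟩ := exists_isClassMin_elemEquiv (r := r) x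
  refine ⟨m, ⟨hm, fun hmin => hne ⟨hyx, fun w hw => ?_⟩⟩, hxm⟩
  have hmy : r m y := by
    rcases trichotomous_of r y m with hym | rfl | hmy
    · exact absurd hym (hmin y (hyx.trans hxm.1))
    · exact absurd hxm.symm hne
    · exact hmy
  rcases hw with ⟨hyw, hwx⟩ | ⟨hxw, hwy⟩
  · have hw : w.1 = m.1 := hxm.symm.2 w (Or.inl ⟨trans_of r hmy hyw, hwx⟩)
    exact hw.trans (hxm.1.symm.trans hyx.symm)
  · exact absurd (trans_of r hxw hwy) (asymm_of r h)

end Returns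

section Composition

variable {T : Type*} {St : T → Type*} {I : ∀ t, St t → Type*} {Jt : T → Type*}
  {rW : (Σ t, Jt t) → (Σ t, Jt t) → Prop}
  {ru : ∀ t, (Σ s : St t, I t s) → (Σ s : St t, I t s) → Prop}
  {Qu : ∀ t, (Σ s : St t, I t s) → Jt t}
  {rv : (Σ q : Σ t, St t, I q.1 q.2) → (Σ q : Σ t, St t, I q.1 q.2) → Prop}

def HasCovByInBlock
    (rv : (Σ q : Σ t, St t, I q.1 q.2) → (Σ q : Σ t, St t, I q.1 q.2) → Prop)
    (x : Σ q : Σ t, St t, I q.1 q.2) : Prop :=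
  ∃ z, CovByRel rv z x ∧ z.1.1 = x.1.1

def blockEmb (t : T) (a : Σ s : St t, I t s) : Σ q : Σ t, St t, I q.1 q.2 :=
  ⟨⟨t, a.1⟩, a.2⟩

theorem exists_eq_blockEmb {t : T} {x : Σ q : Σ t, St t, I q.1 q.2} (h : x.1.1 = t) :
    ∃ a, x = blockEmb t a := by
  obtain ⟨⟨t', s⟩, a⟩ := x
  obtain rfl : t' = t := h
  exact ⟨⟨s, a⟩, rfl⟩

theorem blockEmb_fst_eq_iff {t : T} {a b : Σ s : St t, I t s} :
    (blockEmb t a).1 = (blockEmb t b).1 ↔ a.1 = b.1 := by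
  simp [blockEmb]

theorem IsCompOrder.rel_fMap_of_fst_ne (hv : IsCompOrder rW ru Qu rv)
    {x y : Σ q : Σ t, St t, I q.1 q.2}
    (h : rv x y) (hxy : x.1.1 ≠ y.1.1) : rW (FMap Qu x) (FMap Qu y) :=
  (hv.2.2 x y h).resolve_left fun he => hxy (congrArg (fun p : Σ t, Jt t => p.1) he)

theorem IsCompOrder.isReturn_of_isReturn_blockEmb [∀ t, IsStrictTotalOrder _ (ru t)]
    (hv : IsCompOrder rW ru Qu rv) {t : T} {b : Σ s : St t, I t s}
    {z : Σ q : Σ t, St t, I q.1 q.2} (hb : IsReturn rv (blockEmb t b))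
    (hz : CovByRel rv z (blockEmb t b)) (hzt : z.1.1 = t) : IsReturn (ru t) b := by
  have := hv.1
  have hzb := hb.fst_ne_of_covByRel hz
  obtain ⟨d, rfl⟩ := exists_eq_blockEmb hzt
  refine isReturn_of_covByRel (fun hmin => hb.2 fun y hy hyb => ?_) (hz.comap (hv.2.1 t))
    (mt blockEmb_fst_eq_iff.2 hzb)
  obtain ⟨c, rfl⟩ := exists_eq_blockEmb (congrArg Sigma.fst hy)
  exact hmin c (blockEmb_fst_eq_iff.1 hy) ((hv.2.1 t c b).2 hyb)

theorem IsCompOrder.fMap_rel_rel_of_covByRel (hv : IsCompOrder rW ru Qu rv)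
    {x y z : Σ q : Σ t, St t, I q.1 q.2} (hyx : rv y x) (hyxt : y.1.1 = x.1.1)
    (hz : CovByRel rv z x) (hzt : z.1.1 ≠ x.1.1) :
    rW (FMap Qu y) (FMap Qu z) ∧ rW (FMap Qu z) (FMap Qu x) := by
  have := hv.1
  have hyz : rv y z := hz.rel_of_rel_of_ne hyx (by rintro rfl; exact hzt hyxt)
  exact ⟨hv.rel_fMap_of_fst_ne hyz fun h => hzt (h.symm.trans hyxt),
    hv.rel_fMap_of_fst_ne hz.1 hzt⟩

theorem IsCompOrder.exists_isReturn_fMap [Finite (Σ t, Jt t)] [IsStrictTotalOrder _ rW]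
    (hv : IsCompOrder rW ru Qu rv) {x z : Σ q : Σ t, St t, I q.1 q.2} (hx : IsReturn rv x)
    (hz : CovByRel rv z x) (hzt : z.1.1 ≠ x.1.1) :
    ∃ m, IsReturn rW m ∧ ElemEquiv rW (FMap Qu x) m := by
  obtain ⟨y, hy, hyx⟩ := exists_rel_of_not_isCompMin hx.2
  have hyxt : y.1.1 = x.1.1 := congrArg Sigma.fst hy
  obtain ⟨h₁, h₂⟩ := hv.fMap_rel_rel_of_covByRel hyx hyxt hz hzt
  exact exists_isReturn_elemEquiv hyxt (trans_of rW h₁ h₂)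
    (not_elemEquiv_of_rel_of_rel h₁ h₂ hzt)

theorem IsCompOrder.eq_of_elemEquiv_fMap (hv : IsCompOrder rW ru Qu rv)
    {x₁ x₂ z₁ z₂ : Σ q : Σ t, St t, I q.1 q.2}
    (hz₁ : CovByRel rv z₁ x₁) (hzt₁ : z₁.1.1 ≠ x₁.1.1)
    (hz₂ : CovByRel rv z₂ x₂) (hzt₂ : z₂.1.1 ≠ x₂.1.1)
    (h : ElemEquiv rW (FMap Qu x₁) (FMap Qu x₂)) : x₁ = x₂ := by
  have := hv.1
  rcases trichotomous_of rv x₁ x₂ with h₁₂ | h₁₂ | h₂₁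
  · obtain ⟨ha, hb⟩ := hv.fMap_rel_rel_of_covByRel h₁₂ h.1 hz₂ hzt₂
    exact absurd h (not_elemEquiv_of_rel_of_rel ha hb hzt₂)
  · exact h₁₂
  · obtain ⟨ha, hb⟩ := hv.fMap_rel_rel_of_covByRel h₂₁ h.1.symm hz₁ hzt₁
    exact absurd h.symm (not_elemEquiv_of_rel_of_rel ha hb hzt₁)

theorem IsCompOrder.card_isReturn_hasCovByInBlock_le [Fintype T]
    [∀ t, Finite (Σ s : St t, I t s)] [∀ t, IsStrictTotalOrder _ (ru t)]
    (hv : IsCompOrder rW ru Qu rv) :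
    Nat.card {x // IsReturn rv x ∧ HasCovByInBlock rv x} ≤
      ∑ t, Nat.card {b // IsReturn (ru t) b} := by
  rw [← Nat.card_sigma]
  refine Nat.card_le_card_of_injective
    (fun x => ⟨x.1.1.1, ⟨x.1.1.2, x.1.2⟩, ?_⟩) fun x y h => ?_
  · obtain ⟨z, hz, hzt⟩ := x.2.2
    exact hv.isReturn_of_isReturn_blockEmb x.2.1 hz hzt
  · exact Subtype.ext (congrArg
    (fun c : Σ t, {b : Σ s : St t, I t s // IsReturn (ru t) b} => blockEmb c.1 c.2.1) h)

theorem IsCompOrder.card_isReturn_not_hasCovByInBlock_le [Finite (Σ t, Jt t)]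
    [Finite (Σ q : Σ t, St t, I q.1 q.2)] [IsStrictTotalOrder _ rW]
    (hv : IsCompOrder rW ru Qu rv) :
    Nat.card {x // IsReturn rv x ∧ ¬ HasCovByInBlock rv x} ≤
      Nat.card {m // IsReturn rW m} := by
  have := hv.1
  have hcov (x : {x // IsReturn rv x ∧ ¬ HasCovByInBlock rv x}) :
      ∃ z, CovByRel rv z x.1 ∧ z.1.1 ≠ x.1.1.1 := by
    obtain ⟨y, -, hyx⟩ := exists_rel_of_not_isCompMin x.2.1.2
    obtain ⟨z, hz⟩ := exists_covByRel hyx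
    exact ⟨z, hz, fun hzt => x.2.2 ⟨z, hz, hzt⟩⟩
  choose z hz hzt using hcov
  choose m hm hxm using fun x => hv.exists_isReturn_fMap x.2.1 (hz x) (hzt x)
  refine Nat.card_le_card_of_injective (fun x => ⟨m x, hm x⟩) fun x₁ x₂ h => Subtype.ext ?_
  refine hv.eq_of_elemEquiv_fMap (hz x₁) (hzt x₁) (hz x₂) (hzt x₂) ((hxm x₁).trans ?_)
  rw [show m x₁ = m x₂ from congrArg Subtype.val h]
  exact (hxm x₂).symm

theorem IsCompOrder.card_isReturn_le [Fintype T] [Finite (Σ t, Jt t)]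
    [∀ t, Finite (Σ s : St t, I t s)] [Finite (Σ q : Σ t, St t, I q.1 q.2)]
    [IsStrictTotalOrder _ rW] [∀ t, IsStrictTotalOrder _ (ru t)]
    (hv : IsCompOrder rW ru Qu rv) :
    Nat.card {x // IsReturn rv x} ≤
      Nat.card {m // IsReturn rW m} + ∑ t, Nat.card {b // IsReturn (ru t) b} := by
  rw [Nat.card_subtype_eq_card_and_add_card_and_not _ (HasCovByInBlock rv), add_comm]
  exact add_le_add hv.card_isReturn_not_hasCovByInBlock_le hv.card_isReturn_hasCovByInBlock_le

end Composition

theorem statement13_general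
    {T : Type*} [Fintype T] {St : T → Type*} [∀ t, Fintype (St t)]
    {I : ∀ t, St t → Type*} [∀ t s, Fintype (I t s)] [∀ t s, LinearOrder (I t s)]
    [∀ t s, Nonempty (I t s)]
    {Jt : T → Type*} [∀ t, Fintype (Jt t)] [∀ t, LinearOrder (Jt t)]
    [∀ t, Nonempty (Jt t)]
    {J : Type*} [LinearOrder J]
    (rW : (Σ t, Jt t) → (Σ t, Jt t) → Prop) (Qw : (Σ t, Jt t) → J)
    (hw : IsSeElem rW Qw)
    (ru : ∀ t, (Σ s : St t, I t s) → (Σ s : St t, I t s) → Prop)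
    (Qu : ∀ t, (Σ s : St t, I t s) → Jt t)
    (hu : ∀ t, IsSeElem (ru t) (Qu t))
    (rv : (Σ q : Σ t, St t, I q.1 q.2) → (Σ q : Σ t, St t, I q.1 q.2) → Prop)
    (hv : IsCompOrder rW ru Qu rv) :
    (NumClasses rv : ℤ) - Fintype.card (Σ t, St t) ≤
      ((NumClasses rW : ℤ) - Fintype.card T) +
        ∑ t : T, ((NumClasses (ru t) : ℤ) - Fintype.card (St t)) := by
  have := hw.1.1
  have : ∀ t, IsStrictTotalOrder _ (ru t) := fun t => (hu t).1.1
  have := hv.1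
  simp only [numClasses_eq_card_add_card_isReturn, Nat.card_eq_fintype_card, Nat.cast_add,
    add_sub_cancel_left]
  exact_mod_cast hv.card_isReturn_le

/-- For the operadic composition `v` of `w` with the `u_t`'s one
has `|v| − |S| ≤ (|w| − |T|) + Σ_t (|u_t| − |S_t|)`, where `|·|` counts elementary
equivalence classes. -/
theorem statement13
    {T : Type*} [Fintype T] {St : T → Type*} [∀ t, Fintype (St t)]
    {I : ∀ t, St t → Type*} [∀ t s, Fintype (I t s)] [∀ t s, LinearOrder (I t s)]
    [∀ t s, Nonempty (I t s)]
    {Jt : T → Type*} [∀ t, Fintype (Jt t)] [∀ t, LinearOrder (Jt t)]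
    [∀ t, Nonempty (Jt t)]
    {J : Type*} [Fintype J] [LinearOrder J] [Nonempty J]
    (rW : (Σ t, Jt t) → (Σ t, Jt t) → Prop) (Qw : (Σ t, Jt t) → J)
    (hw : IsSeElem rW Qw)
    (ru : ∀ t, (Σ s : St t, I t s) → (Σ s : St t, I t s) → Prop)
    (Qu : ∀ t, (Σ s : St t, I t s) → Jt t)
    (hu : ∀ t, IsSeElem (ru t) (Qu t))
    (rv : (Σ q : Σ t, St t, I q.1 q.2) → (Σ q : Σ t, St t, I q.1 q.2) → Prop)
    (hv : IsCompOrder rW ru Qu rv) :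
    (NumClasses rv : ℤ) - Fintype.card (Σ t, St t) ≤
      ((NumClasses rW : ℤ) - Fintype.card T) +
        ∑ t : T, ((NumClasses (ru t) : ℤ) - Fintype.card (St t)) :=
  statement13_general rW Qw hw ru Qu hu rv hv
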